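/- If an action a is deterministic in an ILTS (Det(a) = true), and p ⇒a p' and p ⇒a p'' (weak traceable transitions abstracting over silent τ actions), then T(p') = T(p''): the two states reached produce the same trace sets. -/

import Mathlib

/-- An Instrumentable Labelled Transition System (ILTS): states `Prc`,
traceable actions `Act` (labels `some a`), silent action `τ` (label `none`),
an equivalence on states respected by transitions, silent transitions
confluent with all actions, and a determinacy predicate `det`. -/
structure ILTS (Prc Act : Type) where
  step : Prc → Option Act → Prc → Prop
  eqv : Prc → Prc → Prop
  ext : Act → Prop
  det : Act → Bool
  eqv_equiv : Equivalence eqv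
  eqv_resp : ∀ p q l p', eqv p q → step p l p' → ∃ q', step q l q' ∧ eqv p' q'
  tau_tau : ∀ p p' p'', step p none p' → step p none p'' → eqv p' p''
  tau_conf : ∀ p p' a p'', step p none p' → step p (some a) p'' →
      ∃ q, step p' (some a) q ∧ step p'' none q
  det_spec : ∀ a, det a = true →
      ∀ p p' p'', step p (some a) p' → step p (some a) p'' → eqv p' p''

/-- Weak traceable transitions `p ⇒t q`: abstract over silent actions only. -/
inductive ILTS.wt {Prc Act : Type} (S : ILTS Prc Act) : Prc → List Act → Prc → Prop
  | refl : ∀ p, ILTS.wt S p [] p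
  | tau : ∀ {p p' t q}, S.step p none p' → ILTS.wt S p' t q → ILTS.wt S p t q
  | act : ∀ {p a p' t q}, S.step p (some a) p' → ILTS.wt S p' t q → ILTS.wt S p (a :: t) q

/-- The set of traces producible by a state. -/
def ILTS.traces {Prc Act : Type} (S : ILTS Prc Act) (p : Prc) : Set (List Act) :=
  { t | ∃ q, S.wt p t q }

/-! For deterministic `a`, every `q` with `p ⇒a q` has `T(q) = {t | a·t ∈ T(p)}`, a set that does
not depend on `q`. Two facts give this: a silent step never changes the trace set (silent steps
are deterministic up to `≅` and confluent with every action), and by confluence an `a`-step of `p`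
is followed silently by the `a`-steps of the silent descendants of `p`, which determinacy makes
`≅`-equal. -/

namespace ILTS

variable {Prc Act : Type} {S : ILTS Prc Act}

theorem traces_subset_of_eqv {p q : Prc} (h : S.eqv p q) : S.traces p ⊆ S.traces q := by
  rintro t ⟨r, hr⟩
  induction hr generalizing q with
  | refl => exact ⟨q, .refl q⟩
  | tau hs _ ih =>
    obtain ⟨q', hq, he⟩ := S.eqv_resp _ _ _ _ h hs
    obtain ⟨r', hr'⟩ := ih he
    exact ⟨r', .tau hq hr'⟩
  | act hs _ ih =>
    obtain ⟨q', hq, he⟩ := S.eqv_resp _ _ _ _ h hs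
    obtain ⟨r', hr'⟩ := ih he
    exact ⟨r', .act hq hr'⟩

theorem traces_eq_of_eqv {p q : Prc} (h : S.eqv p q) : S.traces p = S.traces q :=
  (traces_subset_of_eqv h).antisymm (traces_subset_of_eqv (S.eqv_equiv.symm h))

theorem traces_eq_of_step_tau {p p' : Prc} (h : S.step p none p') :
    S.traces p = S.traces p' := by
  refine subset_antisymm ?_ fun t ⟨r, hr⟩ => ⟨r, .tau h hr⟩
  rintro t ⟨r, hr⟩
  induction hr generalizing p' with
  | refl => exact ⟨p', .refl p'⟩
  | tau hs hw => exact traces_subset_of_eqv (S.tau_tau _ _ _ hs h) ⟨_, hw⟩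
  | act hs _ ih =>
    obtain ⟨q, hq, hτ⟩ := S.tau_conf _ _ _ _ h hs
    obtain ⟨r', hr'⟩ := ih hτ
    exact ⟨r', .act hq hr'⟩

theorem traces_eq_of_wt_nil {p q : Prc} (h : S.wt p [] q) : S.traces p = S.traces q := by
  generalize hnil : ([] : List Act) = t at h
  induction h with
  | refl => rfl
  | tau hs _ ih => exact (traces_eq_of_step_tau hs).trans (ih hnil)
  | act => cases hnil

theorem traces_eq_of_step_det {a : Act} (hdet : S.det a = true) {p q : Prc}
    (h : S.step p (some a) q) : S.traces q = {t | a :: t ∈ S.traces p} := by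
  refine subset_antisymm (fun t ⟨r, hr⟩ => ⟨r, .act h hr⟩) ?_
  rintro t ⟨r, hr⟩
  generalize hat : a :: t = l at hr
  induction hr generalizing q with
  | refl => cases hat
  | tau hs _ ih =>
    obtain ⟨q', hq', hτ⟩ := S.tau_conf _ _ _ _ hs h
    rw [traces_eq_of_step_tau hτ]
    exact ih hq' hat
  | act hs hw =>
    obtain ⟨rfl, rfl⟩ := List.cons.inj hat
    exact traces_subset_of_eqv (S.eqv_equiv.symm (S.det_spec a hdet _ _ _ h hs)) ⟨_, hw⟩

theorem traces_eq_of_wt_singleton_det {a : Act} (hdet : S.det a = true) {p q : Prc}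
    (h : S.wt p [a] q) : S.traces q = {t | a :: t ∈ S.traces p} := by
  generalize ha : [a] = l at h
  induction h with
  | refl => cases ha
  | tau hs _ ih => rw [ih ha, traces_eq_of_step_tau hs]
  | act hs hw =>
    obtain ⟨rfl, rfl⟩ := List.cons.inj ha
    rw [← traces_eq_of_wt_nil hw, traces_eq_of_step_det hdet hs]

end ILTS

/-- If `a` is a deterministic action of the ILTS and `p ⇒a p'` and `p ⇒a p''`
are weak traceable transitions, then `T(p') = T(p'')`. -/
theorem traces_eq_of_det_weak {Prc Act : Type} (S : ILTS Prc Act)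
    (a : Act) (hdet : S.det a = true)
    (p p' p'' : Prc) (h1 : S.wt p [a] p') (h2 : S.wt p [a] p'') :
    S.traces p' = S.traces p'' := by
  rw [ILTS.traces_eq_of_wt_singleton_det hdet h1, ILTS.traces_eq_of_wt_singleton_det hdet h2]
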